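/- Let D1 and D2 be coherent sets of desirable gambles on the nonempty sets X1 and X2 respectively, and let 𝔅_1 ⊆ P_∅(X1), 𝔅_2 ⊆ P_∅(X2). Then D1 ⊗ D2 := E(A_{1→2} ∪ A_{2→1}) is a coherent set of desirable gambles on X1 × X2. -/

import Mathlib

open scoped BigOperators

namespace IPaper

variable {X : Type*}

/-- A gamble on `X`: a bounded real-valued function. -/
def IsGamble (f : X → ℝ) : Prop := ∃ M : ℝ, ∀ x, |f x| ≤ M

/-- The indicator gamble of an event. -/
noncomputable def ind (B : Set X) : X → ℝ := Set.indicator B 1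

/-- The set `G_{>0}(X)` of nonnegative nonzero gambles. -/
def Gpos (X : Type*) : Set (X → ℝ) := {f | IsGamble f ∧ 0 ≤ f ∧ f ≠ 0}

/-- A coherent set of desirable gambles. -/
structure CoherentSDG (D : Set (X → ℝ)) : Prop where
  subset_gambles : ∀ f ∈ D, IsGamble f
  d1 : ∀ f : X → ℝ, IsGamble f → 0 ≤ f → f ≠ 0 → f ∈ D
  d2 : ∀ f ∈ D, ∀ l : ℝ, 0 < l → l • f ∈ D
  d3 : ∀ f ∈ D, ∀ g ∈ D, f + g ∈ D
  d4 : ∀ f : X → ℝ, f ≤ 0 → f ∉ D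

/-- `posi A`: positive linear hull of `A`. -/
def posi (A : Set (X → ℝ)) : Set (X → ℝ) :=
  {g | ∃ (n : ℕ) (l : Fin (n + 1) → ℝ) (h : Fin (n + 1) → X → ℝ),
    (∀ i, 0 < l i) ∧ (∀ i, h i ∈ A) ∧ g = ∑ i, l i • h i}

/-- `E(A) := posi (A ∪ G_{>0}(X))`. -/
def natExtSet (A : Set (X → ℝ)) : Set (X → ℝ) := posi (A ∪ Gpos X)

/-- `C(X)`: all pairs of a gamble and a nonempty event. -/
def domC (X : Type*) : Set ((X → ℝ) × Set X) := {p | IsGamble p.1 ∧ p.2.Nonempty}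

/-- The conditional lower prevision `lp_D` derived from a set of gambles `D`. -/
noncomputable def lpOf (D : Set (X → ℝ)) (f : X → ℝ) (B : Set X) : EReal :=
  sSup (Real.toEReal '' {m : ℝ | (fun x => (f x - m) * ind B x) ∈ D})

/-- Coherence (Williams) of a conditional lower prevision on a domain `C`. -/
def Coherent (C : Set ((X → ℝ) × Set X)) (lp : (X → ℝ) → Set X → EReal) : Prop :=
  ∃ D : Set (X → ℝ), CoherentSDG D ∧ ∀ p ∈ C, lp p.1 p.2 = lpOf D p.1 p.2

/-- The set `A_lp`. -/
def Alp (C : Set ((X → ℝ) × Set X)) (lp : (X → ℝ) → Set X → EReal) : Set (X → ℝ) :=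
  {g | ∃ p ∈ C, ∃ m : ℝ, (m : EReal) < lp p.1 p.2 ∧ g = fun x => (p.1 x - m) * ind p.2 x}

/-- `E(lp) := E(A_lp)`. -/
def ElpSet (C : Set ((X → ℝ) × Set X)) (lp : (X → ℝ) → Set X → EReal) : Set (X → ℝ) :=
  natExtSet (Alp C lp)

/-- The natural extension of `lp` to all of `C(X)`. -/
noncomputable def natExtLP (C : Set ((X → ℝ) × Set X)) (lp : (X → ℝ) → Set X → EReal)
    (f : X → ℝ) (B : Set X) : EReal :=
  lpOf (ElpSet C lp) f B

/-- Simple `B`-measurable gamble. -/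
def SimpleMeas (Bfam : Set (Set X)) (g : X → ℝ) : Prop :=
  ∃ (c0 : ℝ) (n : ℕ) (c : Fin n → ℝ) (Bs : Fin n → Set X),
    0 ≤ c0 ∧ (∀ i, 0 ≤ c i) ∧ (∀ i, Bs i ∈ Bfam) ∧
    g = fun x => c0 + ∑ i, c i * ind (Bs i) x

/-- `B`-measurable gamble: uniform limit of nonnegative simple `B`-measurable gambles. -/
def BMeas (Bfam : Set (Set X)) (g : X → ℝ) : Prop :=
  ∃ gs : ℕ → X → ℝ, (∀ n, 0 ≤ gs n ∧ SimpleMeas Bfam (gs n)) ∧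
    TendstoUniformly gs g Filter.atTop

/-- A conditional linear prevision on `C(X)`: a coherent self-conjugate conditional
lower prevision on the full domain. -/
def CondLinPrev (P : (X → ℝ) → Set X → EReal) : Prop :=
  Coherent (domC X) P ∧ ∀ p ∈ domC X, P p.1 p.2 = -P (-p.1) p.2

section Product

variable {X1 X2 : Type*}

/-- `A_{1→2}`. -/
def A12 (D2 : Set (X2 → ℝ)) (F1 : Set (Set X1)) : Set (X1 × X2 → ℝ) :=
  {g | ∃ f2 ∈ D2, ∃ B1 ∈ F1 ∪ {Set.univ}, g = fun p => f2 p.2 * ind B1 p.1}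

/-- `A_{2→1}`. -/
def A21 (D1 : Set (X1 → ℝ)) (F2 : Set (Set X2)) : Set (X1 × X2 → ℝ) :=
  {g | ∃ f1 ∈ D1, ∃ B2 ∈ F2 ∪ {Set.univ}, g = fun p => f1 p.1 * ind B2 p.2}

/-- `D1 ⊗ D2`, relative to the families of conditioning events `F1`, `F2`. -/
def indNatExt (D1 : Set (X1 → ℝ)) (D2 : Set (X2 → ℝ))
    (F1 : Set (Set X1)) (F2 : Set (Set X2)) : Set (X1 × X2 → ℝ) :=
  natExtSet (A12 D2 F1 ∪ A21 D1 F2)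

/-- `marg_1(D)`. -/
def marg1 (D : Set (X1 × X2 → ℝ)) : Set (X1 → ℝ) :=
  {f | IsGamble f ∧ (fun p : X1 × X2 => f p.1) ∈ D}

/-- `marg_2(D)`. -/
def marg2 (D : Set (X1 × X2 → ℝ)) : Set (X2 → ℝ) :=
  {f | IsGamble f ∧ (fun p : X1 × X2 => f p.2) ∈ D}

/-- `marg_1(D|B2)`. -/
def marg1c (D : Set (X1 × X2 → ℝ)) (B2 : Set X2) : Set (X1 → ℝ) :=
  {f | IsGamble f ∧ (fun p : X1 × X2 => f p.1 * ind B2 p.2) ∈ D}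

/-- `marg_2(D|B1)`. -/
def marg2c (D : Set (X1 × X2 → ℝ)) (B1 : Set X1) : Set (X2 → ℝ) :=
  {f | IsGamble f ∧ (fun p : X1 × X2 => f p.2 * ind B1 p.1) ∈ D}

/-- Epistemic independence of a set of desirable gambles on `X1 × X2`. -/
def EpIndSDG (F1 : Set (Set X1)) (F2 : Set (Set X2)) (D : Set (X1 × X2 → ℝ)) : Prop :=
  (∀ B2 ∈ F2, marg1c D B2 = marg1 D) ∧ (∀ B1 ∈ F1, marg2c D B1 = marg2 D)

/-- Independent product (of sets of desirable gambles). -/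
def IndProductSDG (F1 : Set (Set X1)) (F2 : Set (Set X2))
    (D1 : Set (X1 → ℝ)) (D2 : Set (X2 → ℝ)) (D : Set (X1 × X2 → ℝ)) : Prop :=
  CoherentSDG D ∧ EpIndSDG F1 F2 D ∧ marg1 D = D1 ∧ marg2 D = D2

/-- The independent natural extension `lp1 ⊗ lp2` on `C(X1 × X2)`. -/
noncomputable def lpProd (C1 : Set ((X1 → ℝ) × Set X1)) (lp1 : (X1 → ℝ) → Set X1 → EReal)
    (C2 : Set ((X2 → ℝ) × Set X2)) (lp2 : (X2 → ℝ) → Set X2 → EReal)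
    (F1 : Set (Set X1)) (F2 : Set (Set X2)) :
    (X1 × X2 → ℝ) → Set (X1 × X2) → EReal :=
  lpOf (indNatExt (ElpSet C1 lp1) (ElpSet C2 lp2) F1 F2)

/-- An independent domain `C ⊆ C(X1 × X2)`. -/
def IndepDomain (F1 : Set (Set X1)) (F2 : Set (Set X2))
    (C : Set ((X1 × X2 → ℝ) × Set (X1 × X2))) : Prop :=
  (∀ (f1 : X1 → ℝ) (B1 : Set X1), IsGamble f1 → B1.Nonempty → ∀ B2 ∈ F2,
    (((fun p : X1 × X2 => f1 p.1), B1 ×ˢ (Set.univ : Set X2)) ∈ C ↔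
      ((fun p : X1 × X2 => f1 p.1), B1 ×ˢ B2) ∈ C)) ∧
  (∀ (f2 : X2 → ℝ) (B2 : Set X2), IsGamble f2 → B2.Nonempty → ∀ B1 ∈ F1,
    (((fun p : X1 × X2 => f2 p.2), (Set.univ : Set X1) ×ˢ B2) ∈ C ↔
      ((fun p : X1 × X2 => f2 p.2), B1 ×ˢ B2) ∈ C))

/-- Epistemic independence of a conditional lower prevision on a domain `C`. -/
def EpIndLP (F1 : Set (Set X1)) (F2 : Set (Set X2))
    (C : Set ((X1 × X2 → ℝ) × Set (X1 × X2)))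
    (lp : (X1 × X2 → ℝ) → Set (X1 × X2) → EReal) : Prop :=
  (∀ (f1 : X1 → ℝ) (B1 : Set X1), IsGamble f1 → B1.Nonempty →
    ((fun p : X1 × X2 => f1 p.1), B1 ×ˢ (Set.univ : Set X2)) ∈ C → ∀ B2 ∈ F2,
    lp (fun p : X1 × X2 => f1 p.1) (B1 ×ˢ (Set.univ : Set X2)) =
      lp (fun p : X1 × X2 => f1 p.1) (B1 ×ˢ B2)) ∧
  (∀ (f2 : X2 → ℝ) (B2 : Set X2), IsGamble f2 → B2.Nonempty →
    ((fun p : X1 × X2 => f2 p.2), (Set.univ : Set X1) ×ˢ B2) ∈ C → ∀ B1 ∈ F1,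
    lp (fun p : X1 × X2 => f2 p.2) ((Set.univ : Set X1) ×ˢ B2) =
      lp (fun p : X1 × X2 => f2 p.2) (B1 ×ˢ B2))

/-- Independent product of two conditional lower previsions, on the joint domain `C`. -/
def IndProductLP (F1 : Set (Set X1)) (F2 : Set (Set X2))
    (C1 : Set ((X1 → ℝ) × Set X1)) (lp1 : (X1 → ℝ) → Set X1 → EReal)
    (C2 : Set ((X2 → ℝ) × Set X2)) (lp2 : (X2 → ℝ) → Set X2 → EReal)
    (C : Set ((X1 × X2 → ℝ) × Set (X1 × X2)))
    (lp : (X1 × X2 → ℝ) → Set (X1 × X2) → EReal) : Prop :=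
  Coherent C lp ∧ EpIndLP F1 F2 C lp ∧
  (∀ p ∈ C1, lp (fun q : X1 × X2 => p.1 q.1) (p.2 ×ˢ (Set.univ : Set X2)) = lp1 p.1 p.2) ∧
  (∀ p ∈ C2, lp (fun q : X1 × X2 => p.1 q.2) ((Set.univ : Set X1) ×ˢ p.2) = lp2 p.1 p.2)

end Product


/-!
Closure under positive combinations is built into `posi`; the content is (D4). Every gamble of
`D1 ⊗ D2` dominates a nontrivial combination `∑ aᵢ(x₂) 1_{Bᵢ}(x₁) + ∑ bⱼ(x₁) 1_{Cⱼ}(x₂)` with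
`aᵢ ∈ D2`, `bⱼ ∈ D1` and nonempty `Bᵢ`, `Cⱼ` (a gamble in `G_{>0}` dominates a multiple of a point
indicator), and such a combination is positive somewhere. Without `b`-terms, an `x₁`-slice through
some `B_{i₀}` is a gamble of `D2`. Otherwise put `W = ⋃ Cⱼ`: the upper prevision of `D2`
conditional on `W` is sublinear and, as the `1_{Cⱼ}` cover `W`, is positive on some `1_{C_{j₀}}`;
Hahn–Banach gives a linear `φ` below it with `φ 1_{C_{j₀}} > 0`. Applying `φ` to the `x₁`-slices
of a nonpositive combination makes `∑ φ(1_{Cⱼ}) bⱼ ∈ D1` nonpositive.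
-/

section Posi

variable {A : Set (X → ℝ)} {f g : X → ℝ}

lemma subset_posi : A ⊆ posi A :=
  fun f hf => ⟨0, fun _ => 1, fun _ => f, fun _ => one_pos, fun _ => hf, by simp⟩

lemma smul_mem_posi (hf : f ∈ posi A) {c : ℝ} (hc : 0 < c) : c • f ∈ posi A := by
  obtain ⟨n, l, h, hl, hh, rfl⟩ := hf
  exact ⟨n, fun i => c * l i, h, fun i => mul_pos hc (hl i), hh,
    by simp [Finset.smul_sum, smul_smul]⟩

lemma add_mem_posi (hf : f ∈ posi A) (hg : g ∈ posi A) : f + g ∈ posi A := by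
  obtain ⟨n, l, h, hl, hh, rfl⟩ := hf
  obtain ⟨m, l', h', hl', hh', rfl⟩ := hg
  refine ⟨n + 1 + m, (Fin.append l l' : Fin ((n + 1) + (m + 1)) → ℝ),
    (Fin.append h h' : Fin ((n + 1) + (m + 1)) → X → ℝ), ?_, ?_, ?_⟩
  · exact Fin.addCases (m := n + 1) (n := m + 1) (by simpa using hl) (by simpa using hl')
  · exact Fin.addCases (m := n + 1) (n := m + 1) (by simpa using hh) (by simpa using hh')
  · have := Fin.sum_univ_add (a := n + 1) (b := m + 1)
      fun i => Fin.append l l' i • Fin.append h h' i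
    simp only [Fin.append_left, Fin.append_right] at this
    exact this.symm

lemma posi_subset {C : Set (X → ℝ)} (hA : A ⊆ C) (hadd : ∀ f ∈ C, ∀ g ∈ C, f + g ∈ C)
    (hsmul : ∀ f ∈ C, ∀ c : ℝ, 0 < c → c • f ∈ C) : posi A ⊆ C := by
  rintro _ ⟨n, l, h, hl, hh, rfl⟩
  exact Finset.sum_induction_nonempty _ (· ∈ C) (fun f g hf hg => hadd f hf g hg)
    Finset.univ_nonempty fun i _ => hsmul _ (hA (hh i)) _ (hl i)

end Posi

section Gambles

def gambles (X : Type*) : Submodule ℝ (X → ℝ) where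
  carrier := {f | IsGamble f}
  add_mem' := fun ⟨M, hM⟩ ⟨K, hK⟩ =>
    ⟨M + K, fun x => (abs_add_le _ _).trans (add_le_add (hM x) (hK x))⟩
  zero_mem' := ⟨0, by simp⟩
  smul_mem' := fun c _ ⟨M, hM⟩ =>
    ⟨|c| * M, fun x => by simpa [abs_mul] using mul_le_mul_of_nonneg_left (hM x) (abs_nonneg c)⟩

lemma IsGamble.mul {f g : X → ℝ} (hf : IsGamble f) (hg : IsGamble g) : IsGamble (f * g) := by
  obtain ⟨M, hM⟩ := hf
  obtain ⟨K, hK⟩ := hg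
  exact ⟨M * K, fun x => by
    simpa [abs_mul] using mul_le_mul (hM x) (hK x) (abs_nonneg _) ((abs_nonneg _).trans (hM x))⟩

lemma IsGamble.comp {Y : Type*} {f : X → ℝ} (hf : IsGamble f) (e : Y → X) : IsGamble (f ∘ e) :=
  let ⟨M, hM⟩ := hf
  ⟨M, fun y => hM (e y)⟩

lemma isGamble_const (c : ℝ) : IsGamble (fun _ : X => c) := ⟨|c|, fun _ => le_rfl⟩

lemma ind_of_mem {B : Set X} {x : X} (hx : x ∈ B) : ind B x = 1 := by simp [ind, hx]

lemma ind_of_notMem {B : Set X} {x : X} (hx : x ∉ B) : ind B x = 0 := by simp [ind, hx]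

lemma ind_nonneg (B : Set X) (x : X) : 0 ≤ ind B x := by
  by_cases hx : x ∈ B <;> simp [ind, hx]

lemma isGamble_ind (B : Set X) : IsGamble (ind B) :=
  ⟨1, fun x => by by_cases hx : x ∈ B <;> simp [ind, hx]⟩

end Gambles

namespace CoherentSDG

variable {D : Set (X → ℝ)}

lemma exists_pos (hD : CoherentSDG D) {f : X → ℝ} (hf : f ∈ D) : ∃ x, 0 < f x := by
  by_contra! h
  exact hD.d4 f h hf

lemma mem_of_nonneg (hD : CoherentSDG D) {f : X → ℝ} (hf : IsGamble f) (h0 : 0 ≤ f) {x : X}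
    (hx : 0 < f x) : f ∈ D :=
  hD.d1 f hf h0 fun h => by simp [h] at hx

lemma mem_of_le (hD : CoherentSDG D) {d e : X → ℝ} (hd : d ∈ D) (hle : d ≤ e) (he : IsGamble e) :
    e ∈ D := by
  by_cases h : e = d
  · rwa [h]
  have hed : e - d ∈ D :=
    hD.d1 _ ((gambles X).sub_mem he (hD.subset_gambles d hd)) (sub_nonneg.mpr hle)
      (sub_ne_zero.mpr h)
  simpa using hD.d3 d hd _ hed

lemma smul_mem_iff (hD : CoherentSDG D) {f : X → ℝ} {c : ℝ} (hc : 0 < c) : c • f ∈ D ↔ f ∈ D :=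
  ⟨fun h => by simpa [smul_smul, hc.ne'] using hD.d2 _ h c⁻¹ (inv_pos.mpr hc),
    fun h => hD.d2 f h c hc⟩

lemma sum_smul_mem_or_eq_zero (hD : CoherentSDG D) {ι : Type*} {s : Finset ι} {c : ι → ℝ}
    {f : ι → X → ℝ} (hc : ∀ i ∈ s, 0 ≤ c i) (hf : ∀ i ∈ s, f i ∈ D) :
    ∑ i ∈ s, c i • f i ∈ D ∨ ∑ i ∈ s, c i • f i = 0 := by
  refine Finset.sum_induction _ (fun g => g ∈ D ∨ g = 0) ?_ (Or.inr rfl) fun i hi => ?_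
  · rintro g g' (hg | rfl) (hg' | rfl)
    · exact Or.inl (hD.d3 g hg g' hg')
    all_goals simp_all
  · rcases (hc i hi).eq_or_lt with h | h
    · simp [← h]
    · exact Or.inl (hD.d2 _ (hf i hi) _ h)

lemma sum_smul_mem (hD : CoherentSDG D) {ι : Type*} [DecidableEq ι] {s : Finset ι} {c : ι → ℝ}
    {f : ι → X → ℝ} (hc : ∀ i ∈ s, 0 ≤ c i) (hf : ∀ i ∈ s, f i ∈ D) {i₀ : ι} (hi₀ : i₀ ∈ s)
    (hci₀ : 0 < c i₀) : ∑ i ∈ s, c i • f i ∈ D := by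
  rw [← Finset.add_sum_erase s _ hi₀]
  have h₀ : c i₀ • f i₀ ∈ D := hD.d2 _ (hf i₀ hi₀) _ hci₀
  rcases hD.sum_smul_mem_or_eq_zero (fun i hi => hc i (Finset.mem_of_mem_erase hi))
    (fun i hi => hf i (Finset.mem_of_mem_erase hi)) with h | h
  · exact hD.d3 _ h₀ _ h
  · rwa [h, add_zero]

end CoherentSDG

section CondUpper

open scoped Pointwise

variable {D : Set (X → ℝ)} {W : Set X} {h k : X → ℝ}

def sellingPrices (D : Set (X → ℝ)) (W : Set X) (h : X → ℝ) : Set ℝ :=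
  {μ | (fun x => (μ - h x) * ind W x) ∈ D}

/-- The upper prevision of `h` conditional on `W` induced by `D`; the infimum is a genuine one
(over a nonempty set bounded below) only for a gamble `h` and a nonempty `W`. -/
noncomputable def condUpper (D : Set (X → ℝ)) (W : Set X) (h : X → ℝ) : ℝ :=
  sInf (sellingPrices D W h)

lemma isGamble_sub_mul_ind (hh : IsGamble h) (μ : ℝ) :
    IsGamble (fun x => (μ - h x) * ind W x) :=
  ((gambles X).sub_mem (isGamble_const μ) hh).mul (isGamble_ind W)

lemma CoherentSDG.const_mul_ind_mem (hD : CoherentSDG D) (hW : W.Nonempty) {μ : ℝ}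
    (hμ : 0 < μ) : (fun x => μ * ind W x) ∈ D := by
  obtain ⟨w, hw⟩ := hW
  exact hD.mem_of_nonneg ((isGamble_const μ).mul (isGamble_ind W))
    (fun x => mul_nonneg hμ.le (ind_nonneg W x)) (x := w) (by simp [ind_of_mem hw, hμ])

lemma sellingPrices_nonempty (hD : CoherentSDG D) (hW : W.Nonempty) (hh : IsGamble h) :
    (sellingPrices D W h).Nonempty := by
  obtain ⟨M, hM⟩ := hh
  refine ⟨M + 1, hD.mem_of_le (hD.const_mul_ind_mem hW one_pos) (fun x => ?_)
    (isGamble_sub_mul_ind ⟨M, hM⟩ _)⟩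
  have := (abs_le.mp (hM x)).2
  exact mul_le_mul_of_nonneg_right (by linarith) (ind_nonneg W x)

lemma bddBelow_sellingPrices (hD : CoherentSDG D) (hh : IsGamble h) :
    BddBelow (sellingPrices D W h) := by
  obtain ⟨M, hM⟩ := hh
  refine ⟨-M, fun μ hμ => ?_⟩
  obtain ⟨x, hx⟩ := hD.exists_pos hμ
  have := neg_le_of_abs_le (hM x)
  nlinarith [ind_nonneg W x]

lemma condUpper_le (hD : CoherentSDG D) (hh : IsGamble h) {μ : ℝ}
    (hμ : μ ∈ sellingPrices D W h) : condUpper D W h ≤ μ :=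
  csInf_le (bddBelow_sellingPrices hD hh) hμ

lemma condUpper_nonpos_of_forall_pos_mem (hD : CoherentSDG D) (hh : IsGamble h)
    (hmem : ∀ μ : ℝ, 0 < μ → μ ∈ sellingPrices D W h) : condUpper D W h ≤ 0 :=
  le_of_forall_gt_imp_ge_of_dense fun μ hμ => condUpper_le hD hh (hmem μ hμ)

lemma condUpper_smul (hD : CoherentSDG D) {c : ℝ} (hc : 0 < c) :
    condUpper D W (c • h) = c * condUpper D W h := by
  have hS : sellingPrices D W (c • h) = c • sellingPrices D W h := by
    ext μ
    rw [Set.mem_smul_set_iff_inv_smul_mem₀ hc.ne']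
    simp only [sellingPrices, Set.mem_ofPred_eq]
    rw [← hD.smul_mem_iff (inv_pos.mpr hc)]
    refine Iff.of_eq (congrArg (· ∈ D) (funext fun x => ?_))
    simp only [Pi.smul_apply, smul_eq_mul]
    field_simp
  rw [condUpper, hS, Real.sInf_smul_of_nonneg hc.le, smul_eq_mul, condUpper]

lemma condUpper_add_le (hD : CoherentSDG D) (hW : W.Nonempty) (hh : IsGamble h)
    (hk : IsGamble k) : condUpper D W (h + k) ≤ condUpper D W h + condUpper D W k := by
  have hsub : sellingPrices D W h + sellingPrices D W k ⊆ sellingPrices D W (h + k) := by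
    rintro _ ⟨μ, hμ, ν, hν, rfl⟩
    rw [sellingPrices, Set.mem_ofPred_eq]
    convert hD.d3 _ hμ _ hν using 1
    ext x
    simp only [Pi.add_apply]
    ring
  rw [condUpper, condUpper, condUpper, ← csInf_add (sellingPrices_nonempty hD hW hh)
    (bddBelow_sellingPrices hD hh) (sellingPrices_nonempty hD hW hk)
    (bddBelow_sellingPrices hD hk)]
  exact csInf_le_csInf (bddBelow_sellingPrices hD ((gambles X).add_mem hh hk))
    ((sellingPrices_nonempty hD hW hh).add (sellingPrices_nonempty hD hW hk)) hsub

lemma condUpper_mono (hD : CoherentSDG D) (hW : W.Nonempty) (hh : IsGamble h)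
    (hk : IsGamble k) (hle : ∀ x ∈ W, h x ≤ k x) : condUpper D W h ≤ condUpper D W k := by
  refine le_csInf (sellingPrices_nonempty hD hW hk) fun μ hμ => condUpper_le hD hh ?_
  refine hD.mem_of_le hμ (fun x => ?_) (isGamble_sub_mul_ind hh μ)
  by_cases hx : x ∈ W
  · simp only [ind_of_mem hx, mul_one]
    linarith [hle x hx]
  · simp [ind_of_notMem hx]

lemma condUpper_nonpos (hD : CoherentSDG D) (hW : W.Nonempty) (hh : IsGamble h)
    (hle : ∀ x ∈ W, h x ≤ 0) : condUpper D W h ≤ 0 := by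
  refine condUpper_nonpos_of_forall_pos_mem hD hh fun μ hμ =>
    hD.mem_of_le (hD.const_mul_ind_mem hW hμ) (fun x => ?_) (isGamble_sub_mul_ind hh μ)
  by_cases hx : x ∈ W
  · simpa [ind_of_mem hx] using hle x hx
  · simp [ind_of_notMem hx]

lemma condUpper_neg_nonpos (hD : CoherentSDG D) (hW : W.Nonempty) (hh : IsGamble h)
    (hmem : (fun x => h x * ind W x) ∈ D) : condUpper D W (-h) ≤ 0 := by
  refine condUpper_nonpos_of_forall_pos_mem hD ((gambles X).neg_mem hh) fun μ hμ => ?_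
  rw [sellingPrices, Set.mem_ofPred_eq]
  convert hD.d3 _ (hD.const_mul_ind_mem hW hμ) _ hmem using 1
  ext x
  simp only [Pi.neg_apply, Pi.add_apply]
  ring

lemma one_le_condUpper_ind (hD : CoherentSDG D) (hW : W.Nonempty) :
    1 ≤ condUpper D W (ind W) := by
  refine le_csInf (sellingPrices_nonempty hD hW (isGamble_ind W)) fun μ hμ => ?_
  obtain ⟨x, hx⟩ := hD.exists_pos hμ
  by_cases hxW : x ∈ W
  · simp only [ind_of_mem hxW, mul_one] at hx
    linarith
  · simp [ind_of_notMem hxW] at hx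

lemma neg_condUpper_neg_le {φ : (X → ℝ) →ₗ[ℝ] ℝ}
    (hφ : ∀ h, IsGamble h → φ h ≤ condUpper D W h) (hh : IsGamble h) :
    -condUpper D W (-h) ≤ φ h := by
  have := hφ (-h) ((gambles X).neg_mem hh)
  rw [map_neg] at this
  linarith

lemma exists_pos_condUpper_ind {κ : Type*} [Fintype κ] (hD : CoherentSDG D) {C : κ → Set X}
    (hW : (⋃ j, C j).Nonempty) : ∃ j, 0 < condUpper D (⋃ j, C j) (ind (C j)) := by
  have hsum : IsGamble (∑ j, ind (C j)) := (gambles X).sum_mem fun j _ => isGamble_ind (C j)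
  have hcover : ∀ x ∈ ⋃ j, C j, ind (⋃ j, C j) x ≤ (∑ j, ind (C j)) x := fun x hx => by
    obtain ⟨j, hj⟩ := Set.mem_iUnion.mp hx
    rw [ind_of_mem hx, Finset.sum_apply, ← ind_of_mem hj]
    exact Finset.single_le_sum (fun j _ => ind_nonneg (C j) x) (Finset.mem_univ j)
  have hsubadd : condUpper D (⋃ j, C j) (∑ j, ind (C j)) ≤
      ∑ j, condUpper D (⋃ j, C j) (ind (C j)) :=
    Finset.le_sum_of_subadditive_on_pred _ IsGamble
      (condUpper_nonpos hD hW (gambles X).zero_mem fun _ _ => le_rfl)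
      (fun _ _ => condUpper_add_le hD hW) (fun _ _ => (gambles X).add_mem) _
      fun j _ => isGamble_ind (C j)
  have hpos : ∑ _j : κ, (0 : ℝ) < ∑ j, condUpper D (⋃ j, C j) (ind (C j)) := by
    have := (one_le_condUpper_ind hD hW).trans
      (condUpper_mono hD hW (isGamble_ind _) hsum hcover)
    simp only [Finset.sum_const_zero]
    linarith
  obtain ⟨j, -, hj⟩ := Finset.exists_lt_of_sum_lt hpos
  exact ⟨j, hj⟩

end CondUpper

theorem exists_linearMap_le_sublinear_eq {E : Type*} [AddCommGroup E] [Module ℝ E]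
    (N : E → ℝ) (N_hom : ∀ c : ℝ, 0 < c → ∀ x, N (c • x) = c * N x)
    (N_add : ∀ x y, N (x + y) ≤ N x + N y) (x₀ : E) :
    ∃ g : E →ₗ[ℝ] ℝ, (∀ x, g x ≤ N x) ∧ g x₀ = N x₀ := by
  have N_zero : N 0 = 0 := by
    have := N_hom 2 two_pos 0
    rw [smul_zero] at this
    linarith
  have H : ∀ c : ℝ, c • x₀ = 0 → c • N x₀ = 0 := by
    intro c hc
    rcases smul_eq_zero.mp hc with rfl | rfl
    · simp
    · simp [N_zero]
  let f := LinearPMap.mkSpanSingleton' (σ := RingHom.id ℝ) x₀ (N x₀) H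
  obtain ⟨g, hgf, hgN⟩ := exists_extension_of_le_sublinear f N N_hom N_add <| by
    rintro ⟨x, hx⟩
    obtain ⟨c, rfl⟩ := Submodule.mem_span_singleton.mp hx
    rw [LinearPMap.mkSpanSingleton'_apply, smul_eq_mul, RingHom.id_apply]
    change c * N x₀ ≤ N (c • x₀)
    rcases lt_trichotomy c 0 with hc | rfl | hc
    · have := N_add (c • x₀) ((-c) • x₀)
      rw [← add_smul, add_neg_cancel, zero_smul, N_zero, N_hom _ (neg_pos.mpr hc)] at this
      nlinarith
    · simp [N_zero]
    · rw [N_hom c hc]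
  refine ⟨g, hgN, ?_⟩
  rw [hgf ⟨x₀, Submodule.mem_span_singleton_self x₀⟩]
  exact LinearPMap.mkSpanSingleton'_apply_self _ _ _ _

theorem exists_linearMap_le_eq_of_sublinearOn {E : Type*} [AddCommGroup E] [Module ℝ E]
    (p : Submodule ℝ E) (N : E → ℝ) (N_hom : ∀ c : ℝ, 0 < c → ∀ x ∈ p, N (c • x) = c * N x)
    (N_add : ∀ x ∈ p, ∀ y ∈ p, N (x + y) ≤ N x + N y) {x₀ : E} (hx₀ : x₀ ∈ p) :
    ∃ g : E →ₗ[ℝ] ℝ, (∀ x ∈ p, g x ≤ N x) ∧ g x₀ = N x₀ := by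
  obtain ⟨g, hgN, hgx₀⟩ := exists_linearMap_le_sublinear_eq (fun x : p => N x)
    (fun c hc x => N_hom c hc x x.2) (fun x y => N_add x x.2 y y.2) ⟨x₀, hx₀⟩
  obtain ⟨G, hG⟩ := LinearMap.exists_extend g
  have hGg : ∀ x : p, G x = g x := fun x => LinearMap.congr_fun hG x
  exact ⟨G, fun x hx => (hGg ⟨x, hx⟩).trans_le (hgN ⟨x, hx⟩), (hGg ⟨x₀, hx₀⟩).trans hgx₀⟩

lemma exists_linearMap_le_condUpper {D : Set (X → ℝ)} {W : Set X} (hD : CoherentSDG D)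
    (hW : W.Nonempty) {h₀ : X → ℝ} (hh₀ : IsGamble h₀) :
    ∃ φ : (X → ℝ) →ₗ[ℝ] ℝ, (∀ h, IsGamble h → φ h ≤ condUpper D W h) ∧
      φ h₀ = condUpper D W h₀ :=
  exists_linearMap_le_eq_of_sublinearOn (gambles X) _ (fun _ hc _ _ => condUpper_smul hD hc)
    (fun _ hh _ hk => condUpper_add_le hD hW hh hk) hh₀

section ProductCombination

variable {X1 X2 ι κ : Type*} [Fintype ι] [Fintype κ] {D1 : Set (X1 → ℝ)} {D2 : Set (X2 → ℝ)}

noncomputable def prodComb (a : ι → X2 → ℝ) (B : ι → Set X1) (b : κ → X1 → ℝ) (C : κ → Set X2) :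
    X1 × X2 → ℝ :=
  fun p => ∑ i, a i p.2 * ind (B i) p.1 + ∑ j, b j p.1 * ind (C j) p.2

lemma sum_functional_mul_nonpos_of_prodComb_nonpos (hD2 : CoherentSDG D2)
    {a : ι → X2 → ℝ} {B : ι → Set X1} {b : κ → X1 → ℝ} {C : κ → Set X2}
    (ha : ∀ i, a i ∈ D2) (hle : prodComb a B b C ≤ 0) (hW : (⋃ j, C j).Nonempty)
    {φ : (X2 → ℝ) →ₗ[ℝ] ℝ} (hφ : ∀ h, IsGamble h → φ h ≤ condUpper D2 (⋃ j, C j) h)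
    (x1 : X1) : ∑ j, φ (ind (C j)) * b j x1 ≤ 0 := by
  set W := ⋃ j, C j
  set s : X2 → ℝ := ∑ i, ind (B i) x1 • a i with hs
  have hs_gamble : IsGamble s :=
    (gambles X2).sum_mem fun i _ => (gambles X2).smul_mem _ (hD2.subset_gambles _ (ha i))
  have hslice : (fun x2 => prodComb a B b C (x1, x2)) = s + ∑ j, b j x1 • ind (C j) := by
    ext x2
    simp [prodComb, hs, Finset.sum_apply, mul_comm]
  have hslice_gamble : IsGamble (s + ∑ j, b j x1 • ind (C j)) :=
    (gambles X2).add_mem hs_gamble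
      ((gambles X2).sum_mem fun j _ => (gambles X2).smul_mem _ (isGamble_ind (C j)))
  have hs_off : ∀ x2 ∉ W, s x2 ≤ 0 := fun x2 hx2 => by
    have hC0 : ∀ j, ind (C j) x2 = 0 := fun j =>
      ind_of_notMem fun h => hx2 (Set.mem_iUnion_of_mem j h)
    simpa [prodComb, hC0, hs, Finset.sum_apply, mul_comm] using hle (x1, x2)
  -- `s` is desirable or zero; being nonpositive off `W`, it is also desirable contingent on `W`.
  have hφs : 0 ≤ φ s := by
    rcases hD2.sum_smul_mem_or_eq_zero (s := Finset.univ) (fun i _ => ind_nonneg (B i) x1)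
      fun i _ => ha i with hmem | hzero
    · rw [← hs] at hmem
      have hsW : (fun x2 => s x2 * ind W x2) ∈ D2 := by
        refine hD2.mem_of_le hmem (fun x2 => ?_) (hs_gamble.mul (isGamble_ind W))
        by_cases hx2 : x2 ∈ W
        · simp [ind_of_mem hx2]
        · simpa [ind_of_notMem hx2] using hs_off x2 hx2
      linarith [neg_condUpper_neg_le hφ hs_gamble, condUpper_neg_nonpos hD2 hW hs_gamble hsW]
    · simp [hs, hzero]
  have hφslice : φ (s + ∑ j, b j x1 • ind (C j)) ≤ 0 :=
    (hφ _ hslice_gamble).trans <| condUpper_nonpos hD2 hW hslice_gamble fun x2 _ => by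
      rw [← congrFun hslice x2]
      exact hle (x1, x2)
  simp only [map_add, map_sum, map_smul, smul_eq_mul] at hφslice
  simp only [mul_comm (φ _)]
  linarith

theorem exists_pos_prodComb_of_nonempty [Nonempty κ] (hD1 : CoherentSDG D1)
    (hD2 : CoherentSDG D2) {a : ι → X2 → ℝ} {B : ι → Set X1} {b : κ → X1 → ℝ}
    {C : κ → Set X2} (ha : ∀ i, a i ∈ D2) (hb : ∀ j, b j ∈ D1) (hC : ∀ j, (C j).Nonempty) :
    ∃ p, 0 < prodComb a B b C p := by
  classical
  by_contra! hle
  have hW : (⋃ j, C j).Nonempty :=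
    (hC (Classical.arbitrary κ)).mono (Set.subset_iUnion C _)
  obtain ⟨j₀, hj₀⟩ := exists_pos_condUpper_ind hD2 hW
  obtain ⟨φ, hφ, hφj₀⟩ := exists_linearMap_le_condUpper hD2 hW (isGamble_ind (C j₀))
  have ht : ∀ j, 0 ≤ φ (ind (C j)) := fun j => by
    have := condUpper_nonpos hD2 hW ((gambles X2).neg_mem (isGamble_ind (C j)))
      fun x _ => by simp [ind_nonneg]
    linarith [neg_condUpper_neg_le hφ (isGamble_ind (C j))]
  have hmem : ∑ j, φ (ind (C j)) • b j ∈ D1 :=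
    hD1.sum_smul_mem (fun j _ => ht j) (fun j _ => hb j) (Finset.mem_univ j₀) (hφj₀ ▸ hj₀)
  refine hD1.d4 _ (fun x1 => ?_) hmem
  simpa [Finset.sum_apply] using
    sum_functional_mul_nonpos_of_prodComb_nonpos hD2 ha (fun p => hle p) hW hφ x1

theorem exists_pos_prodComb_of_isEmpty [Nonempty ι] [IsEmpty κ] (hD2 : CoherentSDG D2)
    {a : ι → X2 → ℝ} {B : ι → Set X1} (b : κ → X1 → ℝ) (C : κ → Set X2)
    (ha : ∀ i, a i ∈ D2) (hB : ∀ i, (B i).Nonempty) : ∃ p, 0 < prodComb a B b C p := by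
  classical
  obtain ⟨i₀⟩ := ‹Nonempty ι›
  obtain ⟨x1, hx1⟩ := hB i₀
  obtain ⟨x2, hx2⟩ := hD2.exists_pos (hD2.sum_smul_mem (c := fun i => ind (B i) x1)
    (fun i _ => ind_nonneg _ _) (fun i _ => ha i) (Finset.mem_univ i₀) (by simp [ind_of_mem hx1]))
  exact ⟨(x1, x2), by simpa [prodComb, Finset.sum_apply, mul_comm] using hx2⟩

theorem exists_pos_prodComb (hD1 : CoherentSDG D1) (hD2 : CoherentSDG D2)
    {a : ι → X2 → ℝ} {B : ι → Set X1} {b : κ → X1 → ℝ} {C : κ → Set X2}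
    (ha : ∀ i, a i ∈ D2) (hB : ∀ i, (B i).Nonempty) (hb : ∀ j, b j ∈ D1)
    (hC : ∀ j, (C j).Nonempty) (hne : Nonempty ι ∨ Nonempty κ) :
    ∃ p, 0 < prodComb a B b C p := by
  rcases isEmpty_or_nonempty κ with hκ | hκ
  · have : Nonempty ι := hne.resolve_right (not_nonempty_iff.mpr hκ)
    exact exists_pos_prodComb_of_isEmpty hD2 b C ha hB
  · exact exists_pos_prodComb_of_nonempty hD1 hD2 ha hb hC

end ProductCombination

section Dominating

variable {X1 X2 : Type*} {D1 : Set (X1 → ℝ)} {D2 : Set (X2 → ℝ)}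

def dominatesProdComb (D1 : Set (X1 → ℝ)) (D2 : Set (X2 → ℝ)) : Set (X1 × X2 → ℝ) :=
  {f | ∃ (m k : ℕ) (a : Fin m → X2 → ℝ) (B : Fin m → Set X1) (b : Fin k → X1 → ℝ)
    (C : Fin k → Set X2), 0 < m + k ∧ (∀ i, a i ∈ D2 ∧ (B i).Nonempty) ∧
    (∀ j, b j ∈ D1 ∧ (C j).Nonempty) ∧ prodComb a B b C ≤ f}

lemma prodComb_append {m m' k k' : ℕ} (a : Fin m → X2 → ℝ) (a' : Fin m' → X2 → ℝ)
    (B : Fin m → Set X1) (B' : Fin m' → Set X1) (b : Fin k → X1 → ℝ) (b' : Fin k' → X1 → ℝ)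
    (C : Fin k → Set X2) (C' : Fin k' → Set X2) :
    prodComb (Fin.append a a') (Fin.append B B') (Fin.append b b') (Fin.append C C') =
      prodComb a B b C + prodComb a' B' b' C' := by
  ext p
  simp only [prodComb, Fin.sum_univ_add, Fin.append_left, Fin.append_right, Pi.add_apply]
  ring

lemma prodComb_smul {m k : ℕ} (c : ℝ) (a : Fin m → X2 → ℝ) (B : Fin m → Set X1)
    (b : Fin k → X1 → ℝ) (C : Fin k → Set X2) :
    prodComb (fun i => c • a i) B (fun j => c • b j) C = c • prodComb a B b C := by
  ext p
  simp only [prodComb, Pi.smul_apply, smul_eq_mul, mul_add, Finset.mul_sum, mul_assoc]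

lemma add_mem_dominatesProdComb {f g : X1 × X2 → ℝ} (hf : f ∈ dominatesProdComb D1 D2)
    (hg : g ∈ dominatesProdComb D1 D2) : f + g ∈ dominatesProdComb D1 D2 := by
  obtain ⟨m, k, a, B, b, C, hmk, ha, hb, hle⟩ := hf
  obtain ⟨m', k', a', B', b', C', hmk', ha', hb', hle'⟩ := hg
  refine ⟨m + m', k + k', Fin.append a a', Fin.append B B', Fin.append b b', Fin.append C C',
    by omega, Fin.addCases (by simpa using ha) (by simpa using ha'),
    Fin.addCases (by simpa using hb) (by simpa using hb'), ?_⟩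
  rw [prodComb_append]
  exact add_le_add hle hle'

lemma smul_mem_dominatesProdComb (hD1 : CoherentSDG D1) (hD2 : CoherentSDG D2)
    {f : X1 × X2 → ℝ} (hf : f ∈ dominatesProdComb D1 D2) {c : ℝ} (hc : 0 < c) :
    c • f ∈ dominatesProdComb D1 D2 := by
  obtain ⟨m, k, a, B, b, C, hmk, ha, hb, hle⟩ := hf
  refine ⟨m, k, fun i => c • a i, B, fun j => c • b j, C, hmk,
    fun i => ⟨hD2.d2 _ (ha i).1 c hc, (ha i).2⟩, fun j => ⟨hD1.d2 _ (hb j).1 c hc, (hb j).2⟩, ?_⟩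
  rw [prodComb_smul]
  exact smul_le_smul_of_nonneg_left hle hc.le

lemma mem_dominatesProdComb_of_le_left {a : X2 → ℝ} {B : Set X1} (ha : a ∈ D2)
    (hB : B.Nonempty) {f : X1 × X2 → ℝ} (hle : ∀ p, a p.2 * ind B p.1 ≤ f p) :
    f ∈ dominatesProdComb D1 D2 :=
  ⟨1, 0, fun _ => a, fun _ => B, Fin.elim0, Fin.elim0, one_pos, fun _ => ⟨ha, hB⟩,
    fun j => j.elim0, fun p => by simpa [prodComb] using hle p⟩

lemma mem_dominatesProdComb_of_le_right {b : X1 → ℝ} {C : Set X2} (hb : b ∈ D1)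
    (hC : C.Nonempty) {f : X1 × X2 → ℝ} (hle : ∀ p, b p.1 * ind C p.2 ≤ f p) :
    f ∈ dominatesProdComb D1 D2 :=
  ⟨0, 1, Fin.elim0, Fin.elim0, fun _ => b, fun _ => C, one_pos, fun i => i.elim0,
    fun _ => ⟨hb, hC⟩, fun p => by simpa [prodComb] using hle p⟩

lemma mem_dominatesProdComb_of_mem_Gpos (hD2 : CoherentSDG D2) {g : X1 × X2 → ℝ}
    (hg : g ∈ Gpos (X1 × X2)) : g ∈ dominatesProdComb D1 D2 := by
  obtain ⟨-, hg0, hgne⟩ := hg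
  obtain ⟨p₀, hp₀⟩ : ∃ p, 0 < g p := by
    by_contra! h
    exact hgne (le_antisymm h hg0)
  refine mem_dominatesProdComb_of_le_left (a := fun x2 => g p₀ * ind {p₀.2} x2) (B := {p₀.1})
    (hD2.mem_of_nonneg ((isGamble_const _).mul (isGamble_ind _))
      (fun x2 => mul_nonneg hp₀.le (ind_nonneg _ _)) (x := p₀.2) (by simpa [ind] using hp₀))
    (Set.singleton_nonempty _) fun p => ?_
  by_cases hp : p = p₀
  · simp [hp, ind]
  · have : p.1 ≠ p₀.1 ∨ p.2 ≠ p₀.2 := by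
      contrapose! hp
      exact Prod.ext hp.1 hp.2
    rcases this with h | h <;> simpa [ind, h] using hg0 p

theorem exists_pos_of_mem_dominatesProdComb (hD1 : CoherentSDG D1) (hD2 : CoherentSDG D2)
    {f : X1 × X2 → ℝ} (hf : f ∈ dominatesProdComb D1 D2) : ∃ p, 0 < f p := by
  obtain ⟨m, k, a, B, b, C, hmk, ha, hb, hle⟩ := hf
  have hne : Nonempty (Fin m) ∨ Nonempty (Fin k) := by
    simp only [← Fin.pos_iff_nonempty]
    omega
  obtain ⟨p, hp⟩ := exists_pos_prodComb hD1 hD2 (fun i => (ha i).1) (fun i => (ha i).2)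
    (fun j => (hb j).1) (fun j => (hb j).2) hne
  exact ⟨p, hp.trans_le (hle p)⟩

end Dominating

lemma nonempty_of_mem_union_univ [Nonempty X] {F : Set (Set X)} (hF : ∀ A ∈ F, A.Nonempty)
    {B : Set X} (hB : B ∈ F ∪ {Set.univ}) : B.Nonempty :=
  hB.elim (hF B) fun h => (Set.mem_singleton_iff.mp h) ▸ Set.univ_nonempty

section IndNatExt

variable {X1 X2 : Type*} {D1 : Set (X1 → ℝ)} {D2 : Set (X2 → ℝ)} {F1 : Set (Set X1)}
  {F2 : Set (Set X2)}

lemma indNatExt_subset_gambles (hD1 : CoherentSDG D1) (hD2 : CoherentSDG D2) :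
    indNatExt D1 D2 F1 F2 ⊆ gambles (X1 × X2) := by
  refine posi_subset ?_ (fun _ hf _ hg => (gambles _).add_mem hf hg)
    fun _ hf c _ => (gambles _).smul_mem c hf
  rintro g ((⟨f2, hf2, B1, -, rfl⟩ | ⟨f1, hf1, B2, -, rfl⟩) | hg)
  · exact ((hD2.subset_gambles f2 hf2).comp Prod.snd).mul ((isGamble_ind B1).comp Prod.fst)
  · exact ((hD1.subset_gambles f1 hf1).comp Prod.fst).mul ((isGamble_ind B2).comp Prod.snd)
  · exact hg.1

lemma indNatExt_subset_dominatesProdComb [Nonempty X1] [Nonempty X2] (hD1 : CoherentSDG D1)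
    (hD2 : CoherentSDG D2) (hF1 : ∀ A ∈ F1, A.Nonempty) (hF2 : ∀ A ∈ F2, A.Nonempty) :
    indNatExt D1 D2 F1 F2 ⊆ dominatesProdComb D1 D2 := by
  refine posi_subset ?_ (fun _ hf _ hg => add_mem_dominatesProdComb hf hg)
    fun _ hf _ hc => smul_mem_dominatesProdComb hD1 hD2 hf hc
  rintro g ((⟨f2, hf2, B1, hB1, rfl⟩ | ⟨f1, hf1, B2, hB2, rfl⟩) | hg)
  · exact mem_dominatesProdComb_of_le_left hf2 (nonempty_of_mem_union_univ hF1 hB1) fun _ => le_rfl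
  · exact mem_dominatesProdComb_of_le_right hf1 (nonempty_of_mem_union_univ hF2 hB2)
      fun _ => le_rfl
  · exact mem_dominatesProdComb_of_mem_Gpos hD2 hg

end IndNatExt

/-- Proposition 10: `D1 ⊗ D2` is a coherent set of desirable gambles
on `X1 × X2`. -/
theorem stmt8 {X1 X2 : Type*} [Nonempty X1] [Nonempty X2]
    (D1 : Set (X1 → ℝ)) (D2 : Set (X2 → ℝ))
    (hD1 : CoherentSDG D1) (hD2 : CoherentSDG D2)
    (F1 : Set (Set X1)) (F2 : Set (Set X2))
    (hF1 : ∀ A ∈ F1, A.Nonempty) (hF2 : ∀ A ∈ F2, A.Nonempty) :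
    CoherentSDG (indNatExt D1 D2 F1 F2) := by
  refine ⟨fun _ hf => indNatExt_subset_gambles hD1 hD2 hf,
    fun f hf h0 hne => subset_posi (Or.inr ⟨hf, h0, hne⟩),
    fun _ hf _ hl => smul_mem_posi hf hl, fun _ hf _ hg => add_mem_posi hf hg,
    fun f hf hmem => ?_⟩
  obtain ⟨p, hp⟩ := exists_pos_of_mem_dominatesProdComb hD1 hD2
    (indNatExt_subset_dominatesProdComb hD1 hD2 hF1 hF2 hmem)
  exact (hf p).not_gt hp

end IPaper
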